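/- Let $p$ be a prime and $k \geq 1$. If $p^k \nmid q_j$ and additionally either $p \mid q_j$ or $k \neq 1$, then the generalized Ramanujan sum satisfies $c_j(a, p^k) = 0$ for every $a$ with $(a, p) = 1$. -/

import Mathlib

open Finset

/-- `e(x) = e^{2πix}`. -/
noncomputable def e (x : ℂ) : ℂ := Complex.exp (2 * Real.pi * Complex.I * x)

/-- The generalized Ramanujan sum. -/
noncomputable def ramanujanC (aj : ℤ) (qj : ℕ) (a : ℤ) (q : ℕ) : ℂ :=
  ∑ k ∈ (Finset.Icc 1 q).filter
      (fun k => Nat.Coprime k q ∧ (k : ℤ) % (Nat.gcd qj q : ℤ) = aj % (Nat.gcd qj q : ℤ)),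
    e ((a : ℂ) * k / q)

/-
Write $q = p^k$ and $g = \gcd(q_j, q)$. Since $p^k \nmid q_j$ (and, when $k = 1$, $p \mid q_j$), we
have $k \ge 2$ and $g \mid p^{k-1}$. Hence the set of summation indices, read modulo $q$, is invariant
under $k' \mapsto k' + p^{k-1}$: this preserves coprimality to $p$ and the class modulo $g$. The
shift multiplies every summand by $e(a/p) \ne 1$, so the sum vanishes.
-/

open Function

section PeriodicSum

variable {M : Type*} [AddCancelCommMonoid M] {f : ℕ → M} {N : ℕ}

theorem Function.Periodic.sum_range_comp_add (hf : Periodic f N) (c : ℕ) :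
    ∑ i ∈ range N, f (i + c) = ∑ i ∈ range N, f i := by
  induction c with
  | zero => rfl
  | succ c ih =>
    have hshift := (sum_range_succ' (fun i ↦ f (i + c)) N).symm.trans
      (sum_range_succ (fun i ↦ f (i + c)) N)
    rw [zero_add, add_comm N c, hf c, add_left_inj] at hshift
    simpa only [add_right_comm _ 1 c, add_assoc] using hshift.trans ih

theorem Function.Periodic.sum_Icc_one (hf : Periodic f N) :
    ∑ i ∈ Icc 1 N, f i = ∑ i ∈ range N, f i := by
  rw [← Ico_add_one_right_eq_Icc, sum_Ico_eq_sum_range, Nat.add_sub_cancel]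
  simpa only [add_comm 1] using hf.sum_range_comp_add 1

end PeriodicSum

theorem Function.Periodic.sum_Icc_eq_zero_of_add_eq_mul {R : Type*} [Ring R] [NoZeroDivisors R]
    {f : ℕ → R} {N c : ℕ} {ζ : R} (hf : Periodic f N) (hζ : ζ ≠ 1)
    (hc : ∀ n, f (n + c) = ζ * f n) : ∑ n ∈ Icc 1 N, f n = 0 := by
  have hfix : ζ * ∑ n ∈ range N, f n = ∑ n ∈ range N, f n := by
    rw [mul_sum, ← hf.sum_range_comp_add c]
    exact sum_congr rfl fun n _ ↦ (hc n).symm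
  rw [hf.sum_Icc_one]
  refine (mul_eq_zero.mp ?_).resolve_left (sub_ne_zero.mpr hζ)
  rw [sub_mul, hfix, one_mul, sub_self]

theorem e_add (x y : ℂ) : e (x + y) = e x * e y := by
  simp only [e, mul_add, Complex.exp_add]

theorem e_intCast (n : ℤ) : e n = 1 := by
  rw [e, mul_comm]
  exact Complex.exp_int_mul_two_pi_mul_I n

theorem e_intCast_div_natCast_eq_one_iff {x : ℤ} {N : ℕ} (hN : N ≠ 0) :
    e (x / N) = 1 ↔ (N : ℤ) ∣ x := by
  rw [← (Complex.isPrimitiveRoot_exp N hN).zpow_eq_one_iff_dvd, ← Complex.exp_int_mul, e]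
  ring_nf

theorem ramanujanC_eq_zero_of_shift {aj : ℤ} {qj : ℕ} {a : ℤ} {q c : ℕ} (hq : q ≠ 0)
    (hgc : Nat.gcd qj q ∣ c) (hcop : ∀ n, Nat.Coprime (n + c) q ↔ Nat.Coprime n q)
    (hac : ¬ (q : ℤ) ∣ a * c) : ramanujanC aj qj a q = 0 := by
  have hmod : ∀ n d : ℕ, Nat.gcd qj q ∣ d →
      ((n + d : ℕ) : ℤ) % (Nat.gcd qj q : ℤ) = (n : ℤ) % (Nat.gcd qj q : ℤ) := by
    rintro n _ ⟨t, rfl⟩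
    push_cast
    exact Int.add_mul_emod_self_left _ _ _
  rw [ramanujanC, sum_filter]
  refine Periodic.sum_Icc_eq_zero_of_add_eq_mul (c := c) (ζ := e ((a * c : ℤ) / q)) ?_ ?_ ?_
  · intro n
    have he : e (a * (n + q : ℕ) / q) = e (a * n / q) := by
      rw [show (a : ℂ) * (n + q : ℕ) / q = a * n / q + (a : ℤ) by push_cast; field_simp,
        e_add, e_intCast, mul_one]
    simp only [Nat.coprime_add_self_left, hmod n q (Nat.gcd_dvd_right qj q), he]
  · exact mt (e_intCast_div_natCast_eq_one_iff hq).mp hac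
  · intro n
    have he : e (a * (n + c : ℕ) / q) = e ((a * c : ℤ) / q) * e (a * n / q) := by
      rw [← e_add]
      push_cast
      ring_nf
    simp only [hcop, hmod n c hgc, he, mul_ite, mul_zero]

theorem Nat.gcd_prime_pow_dvd_pow_pred {p k : ℕ} (hp : p.Prime) {n : ℕ} (h : ¬ p ^ k ∣ n) :
    Nat.gcd n (p ^ k) ∣ p ^ (k - 1) := by
  obtain ⟨m, hm_le, hm⟩ := (Nat.dvd_prime_pow hp).mp (Nat.gcd_dvd_right n (p ^ k))
  have hm_ne : m ≠ k := by
    rintro rfl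
    exact h (hm ▸ Nat.gcd_dvd_left n (p ^ m))
  exact hm ▸ Nat.pow_dvd_pow p (by omega)

theorem ramanujanC_prime_pow_eq_zero {aj : ℤ} {qj : ℕ} {a : ℤ} {p k : ℕ} (hp : p.Prime)
    (hk : 2 ≤ k) (hg : Nat.gcd qj (p ^ k) ∣ p ^ (k - 1)) (ha : ¬ (p : ℤ) ∣ a) :
    ramanujanC aj qj a (p ^ k) = 0 := by
  have hpk : p ^ k = p ^ (k - 1) * p := by rw [← pow_succ]; congr 1; omega
  refine ramanujanC_eq_zero_of_shift (pow_ne_zero k hp.ne_zero) hg (fun n ↦ ?_) ?_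
  · have hpc : p ∣ p ^ (k - 1) := dvd_pow_self p (by omega)
    rw [Nat.coprime_pow_right_iff (by omega), Nat.coprime_pow_right_iff (by omega),
      Nat.coprime_comm, hp.coprime_iff_not_dvd, Nat.dvd_add_left hpc, ← hp.coprime_iff_not_dvd,
      Nat.coprime_comm]
  · rw [hpk, mul_comm a]
    push_cast
    rwa [mul_dvd_mul_iff_left (pow_ne_zero _ (by exact_mod_cast hp.ne_zero))]

theorem stmt3_general (p : ℕ) (hp : p.Prime) (k : ℕ)
    (qj : ℕ) (aj : ℤ)
    (hnd : ¬ p ^ k ∣ qj) (hcond : p ∣ qj ∨ k ≠ 1)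
    (a : ℤ) (ha : Int.gcd a p = 1) :
    ramanujanC aj qj a (p ^ k) = 0 := by
  have hk0 : k ≠ 0 := by rintro rfl; exact hnd (one_dvd qj)
  have hk1 : k ≠ 1 := by rintro rfl; exact hnd (by simpa using hcond)
  have hpa : ¬ (p : ℤ) ∣ a := fun h ↦ hp.one_lt.ne' <| by
    simpa [ha] using (Int.gcd_eq_natAbs_right_iff_dvd.mpr h).symm
  exact ramanujanC_prime_pow_eq_zero hp (by omega) (Nat.gcd_prime_pow_dvd_pow_pred hp hnd) hpa

theorem stmt3 (p : ℕ) (hp : p.Prime) (k : ℕ) (hk : 1 ≤ k)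
    (qj : ℕ) (hqj : 1 ≤ qj) (aj : ℤ)
    (hnd : ¬ p ^ k ∣ qj) (hcond : p ∣ qj ∨ k ≠ 1)
    (a : ℤ) (ha : Int.gcd a p = 1) :
    ramanujanC aj qj a (p ^ k) = 0 :=
  stmt3_general p hp k qj aj hnd hcond a ha
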